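/- Let u′ : ℝ² → ℝ, let φ′ : ℝ² → ℂ be a smooth solution of the heat conduction equation with potential u′, and let ψ′ : ℝ² → ℝ be a smooth nowhere-vanishing solution of the dual heat conduction equation with potential u′. Fix x₁⁰ ∈ ℝ, let C′ : ℝ → ℂ be differentiable, and define φ₁(x₁,x₂) = (1/ψ′(x₁,x₂))·(C′(x₂) + ∫_{x₁⁰}^{x₁} φ′(s,x₂)ψ′(s,x₂) ds). Then φ₁ solves the heat conduction equation with potential u₁ = u′ − 2∂_{x₁}²(log |ψ′|) if and only if dC′/dx₂(x₂) = −(φ′·∂_{x₁}ψ′ − ψ′·∂_{x₁}φ′)(x₁⁰, x₂) for every x₂ ∈ ℝ. -/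

import Mathlib

open MeasureTheory Filter Set

/-- Partial derivative with respect to the first coordinate on `ℝ²`. -/
noncomputable def D1 {E : Type*} [NormedAddCommGroup E] [NormedSpace ℝ E]
    (f : ℝ × ℝ → E) (x : ℝ × ℝ) : E :=
  deriv (fun t => f (t, x.2)) x.1

/-- Partial derivative with respect to the second coordinate on `ℝ²`. -/
noncomputable def D2 {E : Type*} [NormedAddCommGroup E] [NormedSpace ℝ E]
    (f : ℝ × ℝ → E) (x : ℝ × ℝ) : E :=
  deriv (fun t => f (x.1, t)) x.2

lemma hasDerivAt_slice1 {E : Type*} [NormedAddCommGroup E] [NormedSpace ℝ E]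
    {f : ℝ × ℝ → E} (hf : Differentiable ℝ f) (x : ℝ × ℝ) :
    HasDerivAt (fun t => f (t, x.2)) (D1 f x) x.1 := by
  have h : DifferentiableAt ℝ (fun t : ℝ => f (t, x.2)) x.1 :=
    (hf (x.1, x.2)).comp x.1 (differentiableAt_id.prodMk (differentiableAt_const _))
  exact h.hasDerivAt

lemma hasDerivAt_slice2 {E : Type*} [NormedAddCommGroup E] [NormedSpace ℝ E]
    {f : ℝ × ℝ → E} (hf : Differentiable ℝ f) (x : ℝ × ℝ) :
    HasDerivAt (fun t => f (x.1, t)) (D2 f x) x.2 := by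
  have h : DifferentiableAt ℝ (fun t : ℝ => f (x.1, t)) x.2 :=
    (hf (x.1, x.2)).comp x.2 ((differentiableAt_const _).prodMk differentiableAt_id)
  exact h.hasDerivAt

lemma D1_eq_fderiv {E : Type*} [NormedAddCommGroup E] [NormedSpace ℝ E]
    {f : ℝ × ℝ → E} (hf : ContDiff ℝ (⊤ : ℕ∞) f) :
    D1 f = fun x => fderiv ℝ f x (1, 0) := by
  funext x
  have h1 : HasDerivAt (fun t : ℝ => (t, x.2)) ((1 : ℝ), (0 : ℝ)) x.1 :=
    HasDerivAt.prodMk (hasDerivAt_id x.1) (hasDerivAt_const x.1 x.2)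
  exact (((hf.differentiable (by simp)) (x.1, x.2)).hasFDerivAt.comp_hasDerivAt x.1 h1).deriv

lemma D2_eq_fderiv {E : Type*} [NormedAddCommGroup E] [NormedSpace ℝ E]
    {f : ℝ × ℝ → E} (hf : ContDiff ℝ (⊤ : ℕ∞) f) :
    D2 f = fun x => fderiv ℝ f x (0, 1) := by
  funext x
  have h1 : HasDerivAt (fun t : ℝ => (x.1, t)) ((0 : ℝ), (1 : ℝ)) x.2 :=
    HasDerivAt.prodMk (hasDerivAt_const x.2 x.1) (hasDerivAt_id x.2)
  exact (((hf.differentiable (by simp)) (x.1, x.2)).hasFDerivAt.comp_hasDerivAt x.2 h1).deriv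

lemma contDiff_D1 {E : Type*} [NormedAddCommGroup E] [NormedSpace ℝ E]
    {f : ℝ × ℝ → E} (hf : ContDiff ℝ (⊤ : ℕ∞) f) : ContDiff ℝ (⊤ : ℕ∞) (D1 f) := by
  rw [D1_eq_fderiv hf]
  exact (hf.fderiv_right (by simp)).clm_apply contDiff_const

lemma contDiff_D2 {E : Type*} [NormedAddCommGroup E] [NormedSpace ℝ E]
    {f : ℝ × ℝ → E} (hf : ContDiff ℝ (⊤ : ℕ∞) f) : ContDiff ℝ (⊤ : ℕ∞) (D2 f) := by
  rw [D2_eq_fderiv hf]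
  exact (hf.fderiv_right (by simp)).clm_apply contDiff_const
set_option maxHeartbeats 2000000 in
/-- Let `φ'` be a smooth solution of the heat equation with potential
`u'` and `ψ'` a smooth nowhere-vanishing solution of the dual equation. Fix `x₁⁰` and a
differentiable `C' : ℝ → ℂ`, and set
`φ₁(x₁,x₂) = (C'(x₂) + ∫_{x₁⁰}^{x₁} φ'(s,x₂)ψ'(s,x₂) ds)/ψ'(x₁,x₂)`. Then `φ₁` solves the
heat equation with potential `u₁ = u' - 2∂₁² log |ψ'|` if and only if
`dC'/dx₂ (x₂) = -(φ'·∂₁ψ' - ψ'·∂₁φ')(x₁⁰,x₂)` for every `x₂`. -/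
theorem inverse_backlund_constant_condition (u' : ℝ × ℝ → ℝ)
    (φ' : ℝ × ℝ → ℂ) (ψ' : ℝ × ℝ → ℝ)
    (hφ' : ContDiff ℝ (⊤ : ℕ∞) φ')
    (hφ'eq : ∀ x : ℝ × ℝ, -D2 φ' x + D1 (D1 φ') x - (u' x : ℂ) * φ' x = 0)
    (hψ' : ContDiff ℝ (⊤ : ℕ∞) ψ') (hψ'0 : ∀ x, ψ' x ≠ 0)
    (hψ'eq : ∀ x : ℝ × ℝ, D2 ψ' x + D1 (D1 ψ') x - u' x * ψ' x = 0)
    (x₁0 : ℝ) (C' : ℝ → ℂ) (hC' : Differentiable ℝ C')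
    (u₁ : ℝ × ℝ → ℝ)
    (hu₁ : ∀ x : ℝ × ℝ, u₁ x = u' x - 2 * D1 (D1 (fun y => Real.log |ψ' y|)) x)
    (φ₁ : ℝ × ℝ → ℂ)
    (hφ₁ : ∀ x : ℝ × ℝ, φ₁ x =
      (C' x.2 + ∫ s in x₁0..x.1, φ' (s, x.2) * ((ψ' (s, x.2) : ℝ) : ℂ)) /
        ((ψ' x : ℝ) : ℂ)) :
    (∀ x : ℝ × ℝ, -D2 φ₁ x + D1 (D1 φ₁) x - (u₁ x : ℂ) * φ₁ x = 0) ↔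
      (∀ x₂ : ℝ, deriv C' x₂ =
        -(φ' (x₁0, x₂) * ((D1 ψ' (x₁0, x₂) : ℝ) : ℂ) -
          ((ψ' (x₁0, x₂) : ℝ) : ℂ) * D1 φ' (x₁0, x₂))) := by
  have hφ'd : Differentiable ℝ φ' := hφ'.differentiable (by simp)
  have hψ'd : Differentiable ℝ ψ' := hψ'.differentiable (by simp)
  have hψ0C : ∀ y : ℝ × ℝ, ((ψ' y : ℝ) : ℂ) ≠ 0 := fun y => Complex.ofReal_ne_zero.2 (hψ'0 y)
  have hD1φ' : ContDiff ℝ (⊤ : ℕ∞) (D1 φ') := contDiff_D1 hφ'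
  have hD1ψ' : ContDiff ℝ (⊤ : ℕ∞) (D1 ψ') := contDiff_D1 hψ'
  have hD11φ' : ContDiff ℝ (⊤ : ℕ∞) (D1 (D1 φ')) := contDiff_D1 hD1φ'
  have hD11ψ' : ContDiff ℝ (⊤ : ℕ∞) (D1 (D1 ψ')) := contDiff_D1 hD1ψ'
  set P : ℝ × ℝ → ℂ := fun y => φ' y * ((ψ' y : ℝ) : ℂ) with hPdef
  have hPc : Continuous P := hφ'.continuous.mul (Complex.continuous_ofReal.comp hψ'.continuous)
  set W : ℝ × ℝ → ℂ :=
    fun y => ((ψ' y : ℝ) : ℂ) * D1 φ' y - φ' y * ((D1 ψ' y : ℝ) : ℂ) with hWdef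
  set V : ℝ × ℝ → ℂ :=
    fun y => ((ψ' y : ℝ) : ℂ) * D1 (D1 φ') y - φ' y * ((D1 (D1 ψ') y : ℝ) : ℂ) with hVdef
  have hVc : Continuous V := by
    exact ((Complex.continuous_ofReal.comp hψ'.continuous).mul hD11φ'.continuous).sub
      (hφ'.continuous.mul (Complex.continuous_ofReal.comp hD11ψ'.continuous))
  -- slice derivatives of the basic functions
  have sψ1 : ∀ y : ℝ × ℝ, HasDerivAt (fun t => ψ' (t, y.2)) (D1 ψ' y) y.1 :=
    fun y => hasDerivAt_slice1 hψ'd y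
  have sψ2 : ∀ y : ℝ × ℝ, HasDerivAt (fun t => ψ' (y.1, t)) (D2 ψ' y) y.2 :=
    fun y => hasDerivAt_slice2 hψ'd y
  have sφ1 : ∀ y : ℝ × ℝ, HasDerivAt (fun t => φ' (t, y.2)) (D1 φ' y) y.1 :=
    fun y => hasDerivAt_slice1 hφ'd y
  have sφ2 : ∀ y : ℝ × ℝ, HasDerivAt (fun t => φ' (y.1, t)) (D2 φ' y) y.2 :=
    fun y => hasDerivAt_slice2 hφ'd y
  have sb1 : ∀ y : ℝ × ℝ, HasDerivAt (fun t => D1 ψ' (t, y.2)) (D1 (D1 ψ') y) y.1 :=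
    fun y => hasDerivAt_slice1 (hD1ψ'.differentiable (by simp)) y
  have sq1 : ∀ y : ℝ × ℝ, HasDerivAt (fun t => D1 φ' (t, y.2)) (D1 (D1 φ') y) y.1 :=
    fun y => hasDerivAt_slice1 (hD1φ'.differentiable (by simp)) y
  -- heat equations, rearranged
  have hψ2 : ∀ y, D2 ψ' y = u' y * ψ' y - D1 (D1 ψ') y := fun y => by
    have := hψ'eq y; linarith
  have hφ2 : ∀ y, D2 φ' y = D1 (D1 φ') y - (u' y : ℂ) * φ' y := fun y => by
    have := hφ'eq y; linear_combination -this
  -- slice derivatives of P and W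
  have sP1 : ∀ y : ℝ × ℝ,
      HasDerivAt (fun t => P (t, y.2)) (D1 φ' y * ((ψ' y : ℝ) : ℂ) + φ' y * ((D1 ψ' y : ℝ) : ℂ))
        y.1 := fun y => (sφ1 y).mul ((sψ1 y).ofReal_comp)
  have sP2 : ∀ y : ℝ × ℝ, HasDerivAt (fun t => P (y.1, t)) (V y) y.2 := by
    intro y
    have h := (sφ2 y).fun_mul ((sψ2 y).ofReal_comp)
    refine h.congr_deriv ?_
    rw [hφ2 y, hψ2 y, hVdef]
    push_cast
    ring
  have sW1 : ∀ y : ℝ × ℝ, HasDerivAt (fun s => W (s, y.2)) (V y) y.1 := by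
    intro y
    have h := (((sψ1 y).ofReal_comp).fun_mul (sq1 y)).fun_sub ((sφ1 y).fun_mul ((sb1 y).ofReal_comp))
    refine h.congr_deriv ?_
    rw [hVdef]
    push_cast
    ring
  have sW1' : ∀ a b : ℝ, HasDerivAt (fun s => W (s, b)) (V (a, b)) a := fun a b => sW1 (a, b)
  -- the numerator function F
  set F : ℝ × ℝ → ℂ := fun y => C' y.2 + ∫ s in x₁0..y.1, P (s, y.2) with hFdef
  have hφ₁F : ∀ y, φ₁ y = F y / ((ψ' y : ℝ) : ℂ) := by
    intro y
    rw [hφ₁ y, hFdef, hPdef]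
  have sF1 : ∀ y : ℝ × ℝ, HasDerivAt (fun t => F (t, y.2)) (P y) y.1 := by
    intro y
    have hg : Continuous fun s => P (s, y.2) :=
      hPc.comp (continuous_id.prodMk continuous_const)
    have h := intervalIntegral.integral_hasDerivAt_right
      (hg.intervalIntegrable (μ := volume) x₁0 y.1) (hg.stronglyMeasurableAtFilter volume _) hg.continuousAt
    have h2 := (hasDerivAt_const y.1 (C' y.2)).fun_add h
    rw [zero_add] at h2
    simpa only [hFdef] using h2
  have sF2 : ∀ y : ℝ × ℝ,
      HasDerivAt (fun t => F (y.1, t)) (deriv C' y.2 + (W y - W (x₁0, y.2))) y.2 := by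
    intro y
    obtain ⟨M, hM⟩ :=
      (isCompact_uIcc.prod (isCompact_closedBall y.2 1)).exists_bound_of_continuousOn
      (hVc.continuousOn (s := uIcc x₁0 y.1 ×ˢ Metric.closedBall y.2 1))
    have key := (intervalIntegral.hasDerivAt_integral_of_dominated_loc_of_deriv_le
      (F := fun τ s => P (s, τ)) (F' := fun τ s => V (s, τ)) (bound := fun _ => M)
      (a := x₁0) (b := y.1) (x₀ := y.2) (μ := volume) (Metric.ball_mem_nhds y.2 one_pos)
      (Eventually.of_forall fun τ =>
        (hPc.comp (continuous_id.prodMk continuous_const)).aestronglyMeasurable)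
      ((hPc.comp (continuous_id.prodMk continuous_const)).intervalIntegrable x₁0 y.1)
      (hVc.comp (continuous_id.prodMk continuous_const)).aestronglyMeasurable
      (ae_of_all _ fun s hs τ hτ =>
        hM (s, τ) ⟨uIoc_subset_uIcc hs, Metric.ball_subset_closedBall hτ⟩)
      intervalIntegrable_const
      (ae_of_all _ fun s hs τ hτ => sP2 (s, τ))).2
    have hVs : Continuous fun s => V (s, y.2) := hVc.comp (continuous_id.prodMk continuous_const)
    have hval : (∫ s in x₁0..y.1, V (s, y.2)) = W (y.1, y.2) - W (x₁0, y.2) :=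
      intervalIntegral.integral_eq_sub_of_hasDerivAt (fun s _ => sW1' s y.2)
        (hVs.intervalIntegrable (μ := volume) x₁0 y.1)
    rw [hval] at key
    simpa only [hFdef] using ((hC' y.2).hasDerivAt.fun_add key)
  have sψ1' : ∀ a b : ℝ, HasDerivAt (fun t => ψ' (t, b)) (D1 ψ' (a, b)) a := fun a b => sψ1 (a, b)
  have sψ2' : ∀ a b : ℝ, HasDerivAt (fun t => ψ' (a, t)) (D2 ψ' (a, b)) b := fun a b => sψ2 (a, b)
  have sb1' : ∀ a b : ℝ, HasDerivAt (fun t => D1 ψ' (t, b)) (D1 (D1 ψ') (a, b)) a :=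
    fun a b => sb1 (a, b)
  have sP1' : ∀ a b : ℝ, HasDerivAt (fun t => P (t, b))
      (D1 φ' (a, b) * ((ψ' (a, b) : ℝ) : ℂ) + φ' (a, b) * ((D1 ψ' (a, b) : ℝ) : ℂ)) a :=
    fun a b => sP1 (a, b)
  have sF1' : ∀ a b : ℝ, HasDerivAt (fun t => F (t, b)) (P (a, b)) a := fun a b => sF1 (a, b)
  have sF2' : ∀ a b : ℝ, HasDerivAt (fun t => F (a, t))
      (deriv C' b + (W (a, b) - W (x₁0, b))) b := fun a b => sF2 (a, b)
  -- first derivative of φ₁ in x₁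
  have hD1φ₁ : ∀ y : ℝ × ℝ, D1 φ₁ y =
      (P y * ((ψ' y : ℝ) : ℂ) - F y * ((D1 ψ' y : ℝ) : ℂ)) / ((ψ' y : ℝ) : ℂ) ^ 2 := by
    intro y
    obtain ⟨y1, y2⟩ := y
    show deriv (fun t => φ₁ (t, y2)) y1 = _
    refine HasDerivAt.deriv ?_
    simp only [hφ₁F]
    exact (sF1' y1 y2).div ((sψ1' y1 y2).ofReal_comp) (hψ0C (y1, y2))
  -- second derivative of φ₁ in x₁
  have hD11φ₁ : ∀ y : ℝ × ℝ, D1 (D1 φ₁) y =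
      (((D1 φ' y * ((ψ' y : ℝ) : ℂ) + φ' y * ((D1 ψ' y : ℝ) : ℂ)) * ((ψ' y : ℝ) : ℂ)
          + P y * ((D1 ψ' y : ℝ) : ℂ)
          - (P y * ((D1 ψ' y : ℝ) : ℂ) + F y * ((D1 (D1 ψ') y : ℝ) : ℂ)))
            * ((ψ' y : ℝ) : ℂ) ^ 2
        - (P y * ((ψ' y : ℝ) : ℂ) - F y * ((D1 ψ' y : ℝ) : ℂ))
          * (((D1 ψ' y : ℝ) : ℂ) * ((ψ' y : ℝ) : ℂ) + ((ψ' y : ℝ) : ℂ) * ((D1 ψ' y : ℝ) : ℂ)))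
        / (((ψ' y : ℝ) : ℂ) ^ 2) ^ 2 := by
    intro y
    obtain ⟨y1, y2⟩ := y
    have hsq : HasDerivAt (fun t => ((ψ' (t, y2) : ℝ) : ℂ) ^ 2)
        (((D1 ψ' (y1, y2) : ℝ) : ℂ) * ((ψ' (y1, y2) : ℝ) : ℂ)
          + ((ψ' (y1, y2) : ℝ) : ℂ) * ((D1 ψ' (y1, y2) : ℝ) : ℂ)) y1 := by
      have h := ((sψ1' y1 y2).ofReal_comp).fun_mul ((sψ1' y1 y2).ofReal_comp)
      simpa only [← pow_two] using h
    show deriv (fun t => D1 φ₁ (t, y2)) y1 = _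
    refine HasDerivAt.deriv ?_
    simp only [hD1φ₁]
    exact (((sP1' y1 y2).mul ((sψ1' y1 y2).ofReal_comp)).sub
        ((sF1' y1 y2).mul ((sb1' y1 y2).ofReal_comp))).div
      hsq (pow_ne_zero 2 (hψ0C (y1, y2)))
  -- derivative of φ₁ in x₂
  have hD2φ₁ : ∀ y : ℝ × ℝ, D2 φ₁ y =
      ((deriv C' y.2 + (W y - W (x₁0, y.2))) * ((ψ' y : ℝ) : ℂ)
        - F y * ((D2 ψ' y : ℝ) : ℂ)) / ((ψ' y : ℝ) : ℂ) ^ 2 := by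
    intro y
    obtain ⟨y1, y2⟩ := y
    show deriv (fun t => φ₁ (y1, t)) y2 = _
    refine HasDerivAt.deriv ?_
    simp only [hφ₁F]
    exact (sF2' y1 y2).div ((sψ2' y1 y2).ofReal_comp) (hψ0C (y1, y2))
  -- the logarithmic term
  have hlog1 : ∀ y : ℝ × ℝ, D1 (fun z => Real.log |ψ' z|) y = D1 ψ' y / ψ' y := by
    intro y
    obtain ⟨y1, y2⟩ := y
    show deriv (fun t => Real.log |ψ' (t, y2)|) y1 = _
    refine HasDerivAt.deriv ?_
    simp only [Real.log_abs]
    exact (sψ1' y1 y2).log (hψ'0 (y1, y2))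
  have hlog2 : ∀ y : ℝ × ℝ, D1 (D1 (fun z => Real.log |ψ' z|)) y
      = (D1 (D1 ψ') y * ψ' y - D1 ψ' y * D1 ψ' y) / ψ' y ^ 2 := by
    intro y
    obtain ⟨y1, y2⟩ := y
    show deriv (fun t => D1 (fun z => Real.log |ψ' z|) (t, y2)) y1 = _
    refine HasDerivAt.deriv ?_
    simp only [hlog1]
    exact (sb1' y1 y2).div (sψ1' y1 y2) (hψ'0 (y1, y2))
  -- the key identity
  have key : ∀ x : ℝ × ℝ, -D2 φ₁ x + D1 (D1 φ₁) x - (u₁ x : ℂ) * φ₁ x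
      = (W (x₁0, x.2) - deriv C' x.2) / ((ψ' x : ℝ) : ℂ) := by
    intro x
    have ha := hψ0C x
    rw [hD2φ₁ x, hD11φ₁ x, hφ₁F x, hu₁ x, hlog2 x, hψ2 x]
    simp only [hWdef, hPdef]
    push_cast
    field_simp
    ring
  constructor
  · intro h x₂
    have h0 := h (x₁0, x₂)
    rw [key (x₁0, x₂)] at h0
    have hnum := (div_eq_zero_iff.mp h0).resolve_right (hψ0C (x₁0, x₂))
    simp only [hWdef] at hnum
    linear_combination -hnum
  · intro h x
    rw [key x]
    have hz : W (x₁0, x.2) - deriv C' x.2 = 0 := by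
      simp only [hWdef]
      rw [h x.2]; ring
    rw [hz, zero_div]
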